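/- If in addition U ≥ 1, then the clipped optimistic empirical Bellman operator T̂ has a unique fixed point Q̂* : S×A → ℝ, and this fixed point satisfies sup_{(s,a)} |Q̂*(s,a)| ≤ (1 + 32γHU)/(1 − γ). -/

import Mathlib

open Finset

/-- Dot product of a probability vector `p` with a value vector `v`. -/
noncomputable def probDot {S : Type*} [Fintype S] (p v : S → ℝ) : ℝ :=
  ∑ s, p s * v s

/-- Variance of `v` under the probability vector `p`. -/
noncomputable def probVar {S : Type*} [Fintype S] (p v : S → ℝ) : ℝ :=
  (∑ s, p s * (v s) ^ 2) - (probDot p v) ^ 2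

/-- `(MQ)(s) = max_a Q(s,a)`. -/
noncomputable def maxOp {S A : Type*} [Fintype A] [Nonempty A] (Q : S → A → ℝ) (s : S) : ℝ :=
  Finset.univ.sup' Finset.univ_nonempty (Q s)

/-- `Clip_H(V)(s) = min (V s) (min_{s'} V s' + H)`. -/
noncomputable def clipOp {S : Type*} [Fintype S] [Nonempty S] (H : ℝ) (V : S → ℝ) (s : S) : ℝ :=
  min (V s) (Finset.univ.inf' Finset.univ_nonempty V + H)

/-- The exploration bonus `b(s,a,V)`. -/
noncomputable def bonus {S A : Type*} [Fintype S] (Phat : S → A → S → ℝ)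
    (cnt : S → A → ℝ) (U H : ℝ) (s : S) (a : A) (V : S → ℝ) : ℝ :=
  max (4 * Real.sqrt (probVar (Phat s a) V * U / cnt s a)) (32 * H * U / cnt s a)

/-- The clipped optimistic empirical Bellman operator `T̂`. -/
noncomputable def bellmanOp {S A : Type*} [Fintype S] [Fintype A] [Nonempty S] [Nonempty A]
    (γ H U : ℝ) (r : S → A → ℝ) (cnt : S → A → ℝ) (Phat : S → A → S → ℝ)
    (Q : S → A → ℝ) : S → A → ℝ := fun s a =>
  r s a + γ * probDot (Phat s a) (clipOp H (maxOp Q))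
    + γ * bonus Phat cnt U H s a (clipOp H (maxOp Q))

set_option maxHeartbeats 1000000
set_option linter.unusedSectionVars false
set_option linter.unusedVariables false

section Helpers
variable {S : Type*} [Fintype S]

lemma probVar_eq (p v : S → ℝ) (hsum : ∑ s, p s = 1) :
    probVar p v = ∑ s, p s * (v s - probDot p v)^2 := by
  have h : ∀ s ∈ Finset.univ, p s * (v s - probDot p v)^2
      = p s * (v s)^2 - 2 * probDot p v * (p s * v s) + (probDot p v)^2 * p s := by
    intro s _; ring
  rw [Finset.sum_congr rfl h]
  simp only [Finset.sum_add_distrib, Finset.sum_sub_distrib, ← Finset.mul_sum, hsum]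
  simp only [probVar, probDot]
  ring

lemma probVar_nonneg {S : Type*} [Fintype S] (p v : S → ℝ) (hp : ∀ s, 0 ≤ p s)
    (hsum : ∑ s, p s = 1) : 0 ≤ probVar p v := by
  rw [probVar_eq p v hsum]
  exact Finset.sum_nonneg fun s _ => mul_nonneg (hp s) (sq_nonneg _)

lemma probVar_le (p v : S → ℝ) (hp : ∀ s, 0 ≤ p s) (hsum : ∑ s, p s = 1)
    (c H : ℝ) (hv : ∀ s, |v s - c| ≤ H) : probVar p v ≤ H^2 := by
  have key : probVar p v ≤ ∑ s, p s * (v s - c)^2 := by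
    have h : ∑ s, p s * (v s - c)^2 = probVar p v + (probDot p v - c)^2 := by
      rw [probVar_eq p v hsum]
      have h2 : ∀ s ∈ Finset.univ, p s * (v s - c)^2
          = p s * (v s - probDot p v)^2 + 2*(probDot p v - c) * (p s * v s)
            - 2*(probDot p v - c)*probDot p v * p s + (probDot p v - c)^2 * p s := by
        intro s _; ring
      rw [Finset.sum_congr rfl h2]
      simp only [Finset.sum_add_distrib, Finset.sum_sub_distrib, ← Finset.mul_sum, hsum]
      simp only [probDot]; ring
    nlinarith [sq_nonneg (probDot p v - c)]
  calc probVar p v ≤ ∑ s, p s * (v s - c)^2 := key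
    _ ≤ ∑ s, p s * H^2 := Finset.sum_le_sum (fun s _ => by
        have := hv s
        have h2 : (v s - c)^2 ≤ H^2 := by nlinarith [abs_nonneg (v s - c), sq_abs (v s - c)]
        exact mul_le_mul_of_nonneg_left h2 (hp s))
    _ = H^2 := by rw [← Finset.sum_mul, hsum, one_mul]

lemma dev_le (p v : S → ℝ) (hp : ∀ s, 0 ≤ p s) (hsum : ∑ s, p s = 1)
    (H : ℝ) (hv : ∀ s t, |v s - v t| ≤ H) (s : S) : |v s - probDot p v| ≤ H := by
  have h1 : v s - probDot p v = ∑ t, p t * (v s - v t) := by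
    simp only [probDot, mul_sub, Finset.sum_sub_distrib, ← Finset.sum_mul]
    rw [hsum]; ring
  rw [h1]
  calc |∑ t, p t * (v s - v t)| ≤ ∑ t, |p t * (v s - v t)| := Finset.abs_sum_le_sum_abs _ _
    _ ≤ ∑ t, p t * H := Finset.sum_le_sum (fun t _ => by
        rw [abs_mul, abs_of_nonneg (hp t)]
        exact mul_le_mul_of_nonneg_left (hv s t) (hp t))
    _ = H := by rw [← Finset.sum_mul, hsum, one_mul]

lemma probVar_sub_le (p v w : S → ℝ) (hp : ∀ s, 0 ≤ p s) (hsum : ∑ s, p s = 1)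
    (H : ℝ) (hv : ∀ s t, |v s - v t| ≤ H) (hw : ∀ s t, |w s - w t| ≤ H) :
    probVar p v - probVar p w
      ≤ 2*H*∑ s, p s * |v s - w s - (probDot p v - probDot p w)| := by
  rw [probVar_eq p v hsum, probVar_eq p w hsum]
  rw [← Finset.sum_sub_distrib, Finset.mul_sum]
  refine Finset.sum_le_sum (fun s _ => ?_)
  have hA := dev_le p v hp hsum H hv s
  have hB := dev_le p w hp hsum H hw s
  set A := v s - probDot p v with hAdef
  set B := w s - probDot p w with hBdef
  have hab : v s - w s - (probDot p v - probDot p w) = A - B := by rw [hAdef, hBdef]; ring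
  rw [hab]
  have h1 : p s * A^2 - p s * B^2 = p s * (A^2 - B^2) := by ring
  have h2 : 2*H*(p s * |A - B|) = p s * (2*H*|A-B|) := by ring
  rw [h1, h2]
  refine mul_le_mul_of_nonneg_left ?_ (hp s)
  have e1 := abs_le.mp hA
  have e2 := abs_le.mp hB
  have e3 := le_abs_self (A - B)
  have e4 := neg_abs_le (A - B)
  nlinarith [mul_nonneg (by linarith : (0:ℝ) ≤ 2*H - (A+B)) (by linarith : (0:ℝ) ≤ |A-B| + (A-B)),
             mul_nonneg (by linarith : (0:ℝ) ≤ 2*H + (A+B)) (by linarith : (0:ℝ) ≤ |A-B| - (A-B))]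

/-- Key lemma: dot-plus-bonus is 1-Lipschitz w.r.t. the max of the difference. -/
lemma key_lemma [Nonempty S] (p v w : S → ℝ) (hp : ∀ s, 0 ≤ p s) (hsum : ∑ s, p s = 1)
    (H U n : ℝ) (hH : 0 ≤ H) (hU : 0 < U) (hn : 0 < n)
    (hv : ∀ s t, |v s - v t| ≤ H) (hw : ∀ s t, |w s - w t| ≤ H) :
    probDot p v + max (4 * Real.sqrt (probVar p v * U / n)) (32 * H * U / n)
      ≤ probDot p w + max (4 * Real.sqrt (probVar p w * U / n)) (32 * H * U / n)
        + Finset.univ.sup' Finset.univ_nonempty (fun s => v s - w s) := by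
  set x := probVar p v with hxdef
  set y := probVar p w with hydef
  set m := probDot p v - probDot p w with hmdef
  set D := Finset.univ.sup' Finset.univ_nonempty (fun s => v s - w s) with hDdef
  set E := ∑ s, p s * max (v s - w s - m) 0 with hEdef
  have hE0 : 0 ≤ E := Finset.sum_nonneg fun s _ => mul_nonneg (hp s) (le_max_right _ _)
  have hdD : ∀ s, v s - w s ≤ D := fun s => Finset.le_sup' (fun s => v s - w s) (Finset.mem_univ s)
  have hm : m = ∑ s, p s * (v s - w s) := by
    simp only [hmdef, probDot, mul_sub, Finset.sum_sub_distrib]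
  have hmD : m ≤ D := by
    rw [hm]
    calc ∑ s, p s * (v s - w s) ≤ ∑ s, p s * D :=
          Finset.sum_le_sum fun s _ => mul_le_mul_of_nonneg_left (hdD s) (hp s)
      _ = D := by rw [← Finset.sum_mul, hsum, one_mul]
  have hmE : m + E ≤ D := by
    have h1 : m + E = ∑ s, p s * max (v s - w s) m := by
      have h2 : ∀ s ∈ Finset.univ, p s * max (v s - w s) m
          = p s * max (v s - w s - m) 0 + p s * m := by
        intro s _
        have : max (v s - w s) m = max (v s - w s - m) 0 + m := by
          rw [← max_add_add_right]; ring_nf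
        rw [this]; ring
      rw [Finset.sum_congr rfl h2, Finset.sum_add_distrib, ← Finset.sum_mul, hsum]
      ring
    rw [h1]
    calc ∑ s, p s * max (v s - w s) m ≤ ∑ s, p s * D :=
          Finset.sum_le_sum fun s _ =>
            mul_le_mul_of_nonneg_left (max_le (hdD s) hmD) (hp s)
      _ = D := by rw [← Finset.sum_mul, hsum, one_mul]
  -- main claim
  have hkey : max (4 * Real.sqrt (x * U / n)) (32 * H * U / n)
      ≤ max (4 * Real.sqrt (y * U / n)) (32 * H * U / n) + E := by
    by_cases hc : 4 * Real.sqrt (x * U / n) ≤ 32 * H * U / n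
    · have : max (4 * Real.sqrt (x * U / n)) (32 * H * U / n) = 32 * H * U / n :=
        max_eq_right hc
      rw [this]
      have := le_max_right (4 * Real.sqrt (y * U / n)) (32 * H * U / n)
      linarith
    · push_neg at hc
      have hc' : max (4 * Real.sqrt (x * U / n)) (32 * H * U / n)
          = 4 * Real.sqrt (x * U / n) := max_eq_left hc.le
      rw [hc']
      have h0c : (0:ℝ) ≤ 32 * H * U / n := by positivity
      have hsq : 0 < Real.sqrt (x * U / n) := by linarith
      have hxUn : 0 < x * U / n := Real.sqrt_pos.mp hsq
      have hx0 : 0 < x := by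
        rcases div_pos_iff.mp hxUn with ⟨h1, _⟩ | ⟨_, h2⟩
        · nlinarith
        · linarith
      have hxH : x ≤ H^2 := by
        refine probVar_le p v hp hsum (v (Classical.arbitrary S)) H (fun s => hv s _)
      have hH0 : 0 < H := by nlinarith
      set t := 64 * H^2 * U / n with htdef
      have ht0 : 0 < t := by positivity
      have hgt : (4:ℝ) * Real.sqrt (t * U / n) = 32 * H * U / n := by
        have h1 : t * U / n = (8 * H * (U/n))^2 := by
          field_simp [htdef]; rw [htdef, div_mul_cancel₀ _ hn.ne']; ring
        rw [h1, Real.sqrt_sq (by positivity)]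
        field_simp; ring
      set y' := max y t with hy'def
      have hty' : t ≤ y' := le_max_right _ _
      have hy'0 : 0 < y' := lt_of_lt_of_le ht0 hty'
      have hmax2 : 4 * Real.sqrt (y' * U / n)
          ≤ max (4 * Real.sqrt (y * U / n)) (32 * H * U / n) := by
        rw [← hgt]
        rcases le_total y t with h | h
        · rw [hy'def, max_eq_right h]; exact le_max_right _ _
        · rw [hy'def, max_eq_left h]; exact le_max_left _ _
      by_cases hxy : x ≤ y'
      · have : Real.sqrt (x * U / n) ≤ Real.sqrt (y' * U / n) := by
          apply Real.sqrt_le_sqrt; gcongr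
        nlinarith [hmax2]
      · push_neg at hxy
        set A := Real.sqrt (x * U / n) with hAdef
        set B := Real.sqrt (y' * U / n) with hBdef
        have hA2 : A^2 = x * U / n := Real.sq_sqrt (by positivity)
        have hB2 : B^2 = y' * U / n := Real.sq_sqrt (by positivity)
        have hBt : 8 * H * (U/n) ≤ B := by
          have h1 : Real.sqrt (t * U / n) ≤ B := by
            apply Real.sqrt_le_sqrt; gcongr
          have h2 : Real.sqrt (t * U / n) = 8 * H * (U/n) := by
            have h3 : t * U / n = (8 * H * (U/n))^2 := by field_simp [htdef]; rw [htdef, div_mul_cancel₀ _ hn.ne']; ring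
            rw [h3, Real.sqrt_sq (by positivity)]
          linarith
        have hBA : B ≤ A := by
          apply Real.sqrt_le_sqrt; gcongr
        have hAB : A^2 - B^2 = (x - y') * (U/n) := by
          rw [hA2, hB2]; ring
        have hUn : 0 < U / n := div_pos hU hn
        have hABle : (A - B) * (16 * H) ≤ x - y' := by
          have h16 : 16 * H * (U/n) ≤ A + B := by linarith
          have h5 : (A - B) * (16 * H * (U/n)) ≤ (A - B) * (A + B) :=
            mul_le_mul_of_nonneg_left h16 (by linarith)
          have h6 : (A - B) * (A + B) = (x - y') * (U/n) := by nlinarith [hAB]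
          rw [h6] at h5
          have h7 : ((A - B) * (16 * H)) * (U/n) ≤ (x - y') * (U/n) := by nlinarith [h5]
          exact le_of_mul_le_mul_right h7 hUn
        -- variance difference bound
        have hvar := probVar_sub_le p v w hp hsum H hv hw
        have habs : ∑ s, p s * |v s - w s - m| = 2 * E := by
          have h2 : ∀ s ∈ Finset.univ, p s * |v s - w s - m|
              = 2 * (p s * max (v s - w s - m) 0) - p s * (v s - w s) + p s * m := by
            intro s _
            have : |v s - w s - m| = 2 * max (v s - w s - m) 0 - (v s - w s - m) := by
              rcases le_total 0 (v s - w s - m) with h | h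
              · rw [abs_of_nonneg h, max_eq_left h]; ring
              · rw [abs_of_nonpos h, max_eq_right h]; ring
            rw [this]; ring
          rw [Finset.sum_congr rfl h2]
          simp only [Finset.sum_add_distrib, Finset.sum_sub_distrib, ← Finset.mul_sum,
            ← Finset.sum_mul, hsum]
          rw [← hm]; ring
        rw [← hmdef] at hvar
        rw [habs] at hvar
        -- x - y ≤ 2H * 2E,  x - y' ≤ x - y,  so (A-B)*16H ≤ 4H*E  ⟹ 4A - 4B ≤ E
        have hyy' : y ≤ y' := le_max_left _ _
        have hfin : 4 * A ≤ 4 * B + E := by nlinarith [hABle, hvar, hyy', hH0]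
        linarith [hmax2]
  linarith [hkey, hmE, hmD]

end Helpers










section Ops
open Finset
variable {S A : Type*} [Fintype S] [Fintype A] [Nonempty S] [Nonempty A]

lemma clip_osc (H : ℝ) (hH : 0 ≤ H) (V : S → ℝ) (s t : S) :
    |clipOp H V s - clipOp H V t| ≤ H := by
  have hlo : ∀ u, Finset.univ.inf' Finset.univ_nonempty V ≤ clipOp H V u := fun u =>
    le_min (Finset.inf'_le V (Finset.mem_univ u)) (by linarith)
  have hhi : ∀ u, clipOp H V u ≤ Finset.univ.inf' Finset.univ_nonempty V + H := fun u =>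
    min_le_right _ _
  rw [abs_sub_le_iff]
  constructor <;> linarith [hlo s, hlo t, hhi s, hhi t]

lemma max_lip (Q Q' : S → A → ℝ) (e : ℝ) (he : ∀ s a, |Q s a - Q' s a| ≤ e) (s : S) :
    |maxOp Q s - maxOp Q' s| ≤ e := by
  rw [abs_sub_le_iff]
  constructor
  · rw [sub_le_iff_le_add]
    apply Finset.sup'_le
    intro a _
    have h1 := (abs_le.mp (he s a)).2
    have h2 : Q' s a ≤ maxOp Q' s := Finset.le_sup' (Q' s) (Finset.mem_univ a)
    linarith
  · rw [sub_le_iff_le_add]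
    apply Finset.sup'_le
    intro a _
    have h1 := (abs_le.mp (he s a)).1
    have h2 : Q s a ≤ maxOp Q s := Finset.le_sup' (Q s) (Finset.mem_univ a)
    linarith

lemma inf_lip (V W : S → ℝ) (e : ℝ) (he : ∀ s, |V s - W s| ≤ e) :
    |Finset.univ.inf' Finset.univ_nonempty V - Finset.univ.inf' Finset.univ_nonempty W| ≤ e := by
  rw [abs_sub_le_iff]
  constructor
  · obtain ⟨t, _, ht⟩ := Finset.exists_mem_eq_inf' (Finset.univ_nonempty (α := S)) W
    rw [ht, sub_le_iff_le_add]
    have h1 : Finset.univ.inf' Finset.univ_nonempty V ≤ V t :=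
      Finset.inf'_le V (Finset.mem_univ t)
    have h2 := (abs_le.mp (he t)).2
    linarith
  · obtain ⟨t, _, ht⟩ := Finset.exists_mem_eq_inf' (Finset.univ_nonempty (α := S)) V
    rw [ht, sub_le_iff_le_add]
    have h1 : Finset.univ.inf' Finset.univ_nonempty W ≤ W t :=
      Finset.inf'_le W (Finset.mem_univ t)
    have h2 := (abs_le.mp (he t)).1
    linarith

lemma clip_lip (H : ℝ) (Q Q' : S → A → ℝ) (e : ℝ) (he : ∀ s a, |Q s a - Q' s a| ≤ e) (s : S) :
    |clipOp H (maxOp Q) s - clipOp H (maxOp Q') s| ≤ e := by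
  have hmax := max_lip Q Q' e he
  have hinf := inf_lip (maxOp Q) (maxOp Q') e hmax
  refine le_trans (abs_min_sub_min_le_max _ _ _ _) (max_le (hmax s) ?_)
  have : Finset.univ.inf' Finset.univ_nonempty (maxOp Q) + H
      - (Finset.univ.inf' Finset.univ_nonempty (maxOp Q') + H)
      = Finset.univ.inf' Finset.univ_nonempty (maxOp Q)
        - Finset.univ.inf' Finset.univ_nonempty (maxOp Q') := by ring
  rw [this]
  exact hinf

/-- Pointwise contraction bound for the Bellman operator. -/
lemma bellman_contract (γ H U : ℝ) (hγ₀ : 0 < γ) (hH : 0 ≤ H) (hU : 1 ≤ U)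
    (r : S → A → ℝ) (cnt : S → A → ℝ) (hcnt : ∀ s a, 1 ≤ cnt s a)
    (Phat : S → A → S → ℝ)
    (hPnonneg : ∀ s a s', 0 ≤ Phat s a s')
    (hPsum : ∀ s a, ∑ s', Phat s a s' = 1)
    (Q Q' : S → A → ℝ) (e : ℝ) (he : ∀ s a, |Q s a - Q' s a| ≤ e) (s : S) (a : A) :
    |bellmanOp γ H U r cnt Phat Q s a - bellmanOp γ H U r cnt Phat Q' s a| ≤ γ * e := by
  set V := clipOp H (maxOp Q) with hV
  set W := clipOp H (maxOp Q') with hW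
  have hVW : ∀ u, |V u - W u| ≤ e := clip_lip H Q Q' e he
  have hoscV : ∀ u t, |V u - V t| ≤ H := clip_osc H hH (maxOp Q)
  have hoscW : ∀ u t, |W u - W t| ≤ H := clip_osc H hH (maxOp Q')
  have hsup : ∀ (v w : S → ℝ), (∀ u, |v u - w u| ≤ e) →
      Finset.univ.sup' Finset.univ_nonempty (fun u => v u - w u) ≤ e := by
    intro v w h
    apply Finset.sup'_le
    intro u _
    exact (abs_le.mp (h u)).2
  have h1 := key_lemma (Phat s a) V W (hPnonneg s a) (hPsum s a) H U (cnt s a) hH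
    (by linarith) (by linarith [hcnt s a]) hoscV hoscW
  have h2 := key_lemma (Phat s a) W V (hPnonneg s a) (hPsum s a) H U (cnt s a) hH
    (by linarith) (by linarith [hcnt s a]) hoscW hoscV
  have h1' := hsup V W hVW
  have h2' := hsup W V (fun u => by rw [abs_sub_comm]; exact hVW u)
  have hb : |probDot (Phat s a) V + bonus Phat cnt U H s a V
      - (probDot (Phat s a) W + bonus Phat cnt U H s a W)| ≤ e := by
    rw [abs_sub_le_iff]
    constructor
    · simp only [bonus]
      linarith [h1, h1']
    · simp only [bonus]
      linarith [h2, h2']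
  have hexp : bellmanOp γ H U r cnt Phat Q s a - bellmanOp γ H U r cnt Phat Q' s a
      = γ * (probDot (Phat s a) V + bonus Phat cnt U H s a V
        - (probDot (Phat s a) W + bonus Phat cnt U H s a W)) := by
    simp only [bellmanOp, ← hV, ← hW]; ring
  rw [hexp, abs_mul, abs_of_nonneg hγ₀.le]
  exact mul_le_mul_of_nonneg_left hb hγ₀.le

end Ops

/-- If `U ≥ 1`, then the clipped optimistic empirical Bellman operator has a
unique fixed point `Q̂*`, which satisfies `sup |Q̂*| ≤ (1 + 32γHU)/(1 - γ)`. -/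
theorem bellmanOp_fixed_point
    {S A : Type*} [Fintype S] [Fintype A] [Nonempty S] [Nonempty A]
    (γ H U : ℝ) (hγ₀ : 0 < γ) (hγ₁ : γ < 1) (hH : 0 ≤ H) (hU : 1 ≤ U)
    (r : S → A → ℝ) (hr : ∀ s a, r s a ∈ Set.Icc (0 : ℝ) 1)
    (cnt : S → A → ℝ) (hcnt : ∀ s a, 1 ≤ cnt s a)
    (Phat : S → A → S → ℝ)
    (hPnonneg : ∀ s a s', 0 ≤ Phat s a s')
    (hPle : ∀ s a s', Phat s a s' ≤ 1)
    (hPsum : ∀ s a, ∑ s', Phat s a s' = 1) :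
    ∃ Qhat : S → A → ℝ,
      bellmanOp γ H U r cnt Phat Qhat = Qhat
      ∧ (∀ Q : S → A → ℝ, bellmanOp γ H U r cnt Phat Q = Q → Q = Qhat)
      ∧ (∀ s a, |Qhat s a| ≤ (1 + 32 * γ * H * U) / (1 - γ)) := by
  have hcontr : ∀ Q Q' : S → A → ℝ,
      dist (bellmanOp γ H U r cnt Phat Q) (bellmanOp γ H U r cnt Phat Q') ≤ γ * dist Q Q' := by
    intro Q Q'
    have he : ∀ s a, |Q s a - Q' s a| ≤ dist Q Q' := by
      intro s a
      calc |Q s a - Q' s a| = dist (Q s a) (Q' s a) := (Real.dist_eq _ _).symm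
        _ ≤ dist (Q s) (Q' s) := dist_le_pi_dist _ _ a
        _ ≤ dist Q Q' := dist_le_pi_dist _ _ s
    rw [dist_pi_le_iff (by positivity)]
    intro s
    rw [dist_pi_le_iff (by positivity)]
    intro a
    rw [Real.dist_eq]
    exact bellman_contract γ H U hγ₀ hH hU r cnt hcnt Phat hPnonneg hPsum Q Q'
      (dist Q Q') he s a
  set K : NNReal := ⟨γ, hγ₀.le⟩ with hKdef
  have hLip : LipschitzWith K (bellmanOp γ H U r cnt Phat) :=
    LipschitzWith.of_dist_le_mul (fun x y => hcontr x y)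
  have hCW : ContractingWith K (bellmanOp γ H U r cnt Phat) :=
    ⟨by rw [hKdef]; exact_mod_cast hγ₁, hLip⟩
  set Qhat := ContractingWith.fixedPoint (bellmanOp γ H U r cnt Phat) hCW with hQdef
  have hfix : bellmanOp γ H U r cnt Phat Qhat = Qhat := hCW.fixedPoint_isFixedPt
  refine ⟨Qhat, hfix, ?_, ?_⟩
  · intro Q hQ
    exact hCW.fixedPoint_unique' hQ hCW.fixedPoint_isFixedPt
  · -- the norm bound
    set N := dist Qhat (0 : S → A → ℝ) with hNdef
    have hN0 : 0 ≤ N := dist_nonneg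
    have hNc : ∀ s a, |Qhat s a| ≤ N := by
      intro s a
      calc |Qhat s a| = dist (Qhat s a) ((0 : S → A → ℝ) s a) := by
            simp [Real.dist_eq]
        _ ≤ dist (Qhat s) ((0 : S → A → ℝ) s) := dist_le_pi_dist _ _ a
        _ ≤ N := dist_le_pi_dist _ _ s
    set V := clipOp H (maxOp Qhat) with hVdef
    have hVub : ∀ u, V u ≤ N := by
      intro u
      refine le_trans (min_le_left _ _) ?_
      apply Finset.sup'_le
      intro a _
      exact (abs_le.mp (hNc u a)).2
    have hVlb : ∀ u, -N ≤ V u := by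
      intro u
      have hmax : ∀ t, -N ≤ maxOp Qhat t := by
        intro t
        have h1 : Qhat t (Classical.arbitrary A) ≤ maxOp Qhat t :=
          Finset.le_sup' (Qhat t) (Finset.mem_univ _)
        have h2 := (abs_le.mp (hNc t (Classical.arbitrary A))).1
        linarith
      refine le_min (hmax u) ?_
      have h3 : ∀ t ∈ Finset.univ, -N ≤ maxOp Qhat t := fun t _ => hmax t
      have h4 : -N ≤ Finset.univ.inf' Finset.univ_nonempty (maxOp Qhat) :=
        Finset.le_inf' _ _ h3
      linarith
    have hdot : ∀ s a, |probDot (Phat s a) V| ≤ N := by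
      intro s a
      calc |probDot (Phat s a) V| ≤ ∑ u, |Phat s a u * V u| :=
            Finset.abs_sum_le_sum_abs _ _
        _ ≤ ∑ u, Phat s a u * N := Finset.sum_le_sum (fun u _ => by
            rw [abs_mul, abs_of_nonneg (hPnonneg s a u)]
            exact mul_le_mul_of_nonneg_left (abs_le.mpr ⟨hVlb u, hVub u⟩) (hPnonneg s a u))
        _ = N := by rw [← Finset.sum_mul, hPsum, one_mul]
    have hbon : ∀ s a, bonus Phat cnt U H s a V ≤ 32 * H * U := by
      intro s a
      have hosc : ∀ u t, |V u - V t| ≤ H := clip_osc H hH (maxOp Qhat)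
      have hvar : probVar (Phat s a) V ≤ H ^ 2 :=
        probVar_le (Phat s a) V (hPnonneg s a) (hPsum s a) (V (Classical.arbitrary S)) H
          (fun u => hosc u _)
      have hvar0 : 0 ≤ probVar (Phat s a) V :=
        probVar_nonneg (Phat s a) V (hPnonneg s a) (hPsum s a)
      have hn := hcnt s a
      refine max_le ?_ ?_
      · have h1 : probVar (Phat s a) V * U / cnt s a ≤ (H * U) ^ 2 := by
          have h2 : probVar (Phat s a) V * U / cnt s a ≤ probVar (Phat s a) V * U := by
            apply div_le_self (by positivity) hn
          nlinarith [mul_le_mul_of_nonneg_right hvar (by linarith : (0:ℝ) ≤ U),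
            mul_nonneg (mul_nonneg (sq_nonneg H) (by linarith : (0:ℝ) ≤ U)) (by linarith : (0:ℝ) ≤ U - 1)]
        have h3 : Real.sqrt (probVar (Phat s a) V * U / cnt s a) ≤ H * U := by
          rw [show H * U = Real.sqrt ((H * U) ^ 2) from (Real.sqrt_sq (by positivity)).symm]
          exact Real.sqrt_le_sqrt h1
        nlinarith [h3, Real.sqrt_nonneg (probVar (Phat s a) V * U / cnt s a)]
      · exact div_le_self (by positivity) hn
    have hbon0 : ∀ s a, 0 ≤ bonus Phat cnt U H s a V := by
      intro s a
      exact le_max_of_le_left (by positivity)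
    have hpt : ∀ s a, |Qhat s a| ≤ 1 + γ * N + γ * (32 * H * U) := by
      intro s a
      have heq : Qhat s a = bellmanOp γ H U r cnt Phat Qhat s a := by rw [hfix]
      rw [heq]
      simp only [bellmanOp, ← hVdef]
      have hr1 := (hr s a).1
      have hr2 := (hr s a).2
      have hd := abs_le.mp (hdot s a)
      have hb1 := hbon s a
      have hb2 := hbon0 s a
      rw [abs_le]
      constructor
      · nlinarith [hd.1, hb2]
      · nlinarith [hd.2, hb1]
    have hNB : N ≤ 1 + γ * N + γ * (32 * H * U) := by
      rw [hNdef, dist_pi_le_iff (by positivity)]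
      intro s
      rw [dist_pi_le_iff (by positivity)]
      intro a
      have : dist (Qhat s a) ((0 : S → A → ℝ) s a) = |Qhat s a| := by simp [Real.dist_eq]
      rw [this]
      exact hpt s a
    have hfinal : N ≤ (1 + 32 * γ * H * U) / (1 - γ) := by
      rw [le_div_iff₀ (by linarith : (0:ℝ) < 1 - γ)]
      nlinarith [hNB]
    intro s a
    exact le_trans (hNc s a) hfinal
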